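/- Suppose 0 < ε̄₁ < 1 where ε̄₁ = min{ε₁ + β, |𝒮₁|/|𝒮|}. Then the regret of the ε₁-robust meta-policy π^{ε₁} on the perturbed task distribution q^{ε₁} is Regret(π^{ε₁}, q^{ε₁}) = (1−ε̄₁)|𝒮₀| + ε̄₁|𝒮₁| + 2√( ε̄₁(1−ε̄₁)|𝒮₀||𝒮₁| ). -/

import Mathlib

/-! The meta-policy is proportional to `√q`, and for `π = √q / Z` every goal contributes
`q g / π g = √(q g) · Z`. Since `Z = ∑ g, √(q g)` (here `|𝒮₀|·√((1-ε̄)/|𝒮₀|) + |𝒮₁|·√(ε̄/|𝒮₁|)`),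
the regret is `Z²`, and expanding `Z² = (√a + √b)²` gives the formula. -/

theorem Real.div_div_sqrt (x Z : ℝ) : x / (√x / Z) = √x * Z := by
  rcases le_or_gt x 0 with hx | hx
  · simp [Real.sqrt_eq_zero'.2 hx]
  · field_simp [(Real.sqrt_pos.2 hx).ne']
    rw [Real.sq_sqrt hx.le]

theorem Real.natCast_mul_sqrt_div (x : ℝ) (n : ℕ) : n * √(x / n) = √(x * n) := by
  rcases Nat.eq_zero_or_pos n with rfl | hn
  · simp
  · have hxn : x * n = (n : ℝ) ^ 2 * (x / n) := by field_simp
    rw [hxn, Real.sqrt_mul (sq_nonneg _), Real.sqrt_sq (Nat.cast_nonneg n)]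

theorem Real.sqrt_add_sqrt_sq {a b : ℝ} (ha : 0 ≤ a) (hb : 0 ≤ b) :
    (√a + √b) ^ 2 = a + b + 2 * √(a * b) := by
  rw [add_sq, Real.sq_sqrt ha, Real.sq_sqrt hb, Real.sqrt_mul ha]
  ring

theorem Finset.sum_div_sqrt_div {ι : Type*} (s : Finset ι) (q : ι → ℝ) (Z : ℝ) :
    ∑ g ∈ s, q g / (√(q g) / Z) = (∑ g ∈ s, √(q g)) * Z := by
  simp_rw [Real.div_div_sqrt, Finset.sum_mul]

theorem Finset.sum_sqrt_ite_div_card {S : Type*} [Fintype S] [DecidableEq S]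
    (s : Finset S) (a b : ℝ) :
    ∑ g, √(if g ∈ s then a / s.card else b / sᶜ.card) = √(a * s.card) + √(b * sᶜ.card) := by
  simp_rw [apply_ite Real.sqrt]
  rw [Finset.sum_ite, Finset.filter_mem_eq_inter, Finset.univ_inter, Finset.filter_not,
    Finset.filter_mem_eq_inter, Finset.univ_inter, ← Finset.compl_eq_univ_sdiff]
  simp only [Finset.sum_const, nsmul_eq_mul, Real.natCast_mul_sqrt_div]

theorem stmt_11_general {S : Type*} [Fintype S] [DecidableEq S]
    (S0 : Finset S)
    (εbar1 : ℝ)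
    (hpos : 0 < εbar1) (hlt : εbar1 < 1)
    (qε1 : S → ℝ)
    (hqε1 : ∀ g, qε1 g = if g ∈ S0 then (1 - εbar1) / S0.card else εbar1 / S0ᶜ.card)
    (Z1 : ℝ) (hZ1 : Z1 = Real.sqrt ((1 - εbar1) * S0.card) + Real.sqrt (εbar1 * S0ᶜ.card))
    (πε1 : S → ℝ)
    (hπε1 : ∀ g, πε1 g = if g ∈ S0 then Real.sqrt ((1 - εbar1) / S0.card) / Z1
        else Real.sqrt (εbar1 / S0ᶜ.card) / Z1) :
    ∑ g, qε1 g / πε1 g =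
      (1 - εbar1) * S0.card + εbar1 * S0ᶜ.card +
        2 * Real.sqrt (εbar1 * (1 - εbar1) * S0.card * S0ᶜ.card) := by
  have hπ : πε1 = fun g => √(qε1 g) / Z1 := by
    funext g
    rw [hπε1, hqε1]
    split_ifs <;> rfl
  have hZ : ∑ g, √(qε1 g) = Z1 := by
    simp_rw [hqε1]
    rw [Finset.sum_sqrt_ite_div_card, hZ1]
  rw [hπ, Finset.sum_div_sqrt_div, hZ, ← sq, hZ1,
    Real.sqrt_add_sqrt_sq (mul_nonneg (by linarith) (Nat.cast_nonneg _))
      (mul_nonneg hpos.le (Nat.cast_nonneg _))]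
  ring_nf

/-- With `0 < ε̄₁ < 1`, the regret of the ε₁-robust meta-policy on the perturbed
distribution `q^{ε₁}` is `(1-ε̄₁)|S0| + ε̄₁|S1| + 2√(ε̄₁(1-ε̄₁)|S0||S1|)`. -/
theorem stmt_11 {S : Type*} [Fintype S] [DecidableEq S] [Nonempty S]
    (S0 : Finset S) (hS0 : S0.Nonempty) (hS1 : S0ᶜ.Nonempty)
    (β ε1 : ℝ) (hβ0 : 0 ≤ β) (hβ1 : β ≤ 1) (hε1 : 0 ≤ ε1)
    (εbar1 : ℝ) (hεbar1 : εbar1 = min (ε1 + β) ((S0ᶜ.card : ℝ) / Fintype.card S))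
    (hpos : 0 < εbar1) (hlt : εbar1 < 1)
    (qε1 : S → ℝ)
    (hqε1 : ∀ g, qε1 g = if g ∈ S0 then (1 - εbar1) / S0.card else εbar1 / S0ᶜ.card)
    (Z1 : ℝ) (hZ1 : Z1 = Real.sqrt ((1 - εbar1) * S0.card) + Real.sqrt (εbar1 * S0ᶜ.card))
    (πε1 : S → ℝ)
    (hπε1 : ∀ g, πε1 g = if g ∈ S0 then Real.sqrt ((1 - εbar1) / S0.card) / Z1
        else Real.sqrt (εbar1 / S0ᶜ.card) / Z1) :
    ∑ g, qε1 g / πε1 g =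
      (1 - εbar1) * S0.card + εbar1 * S0ᶜ.card +
        2 * Real.sqrt (εbar1 * (1 - εbar1) * S0.card * S0ᶜ.card) :=
  stmt_11_general S0 εbar1 hpos hlt qε1 hqε1 Z1 hZ1 πε1 hπε1
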